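/- arXiv:1104.0636 — 5 statements merged into one kernel-verified Lean document; each statement's English description precedes it below -/
import Mathlib

section
/- Define χ^k_m(d_1,…,d_m) recursively by: χ^k_0 = k+1; χ^k_k(d_1,…,d_k) = d_1⋯d_k; and for 0 < m < k, χ^k_m(d_1,…,d_m) = d_m·χ^{k-1}_{m-1}(d_1,…,d_{m-1}) − (d_m−1)·χ^{k-1}_m(d_1,…,d_m). Then for all 1 ≤ d_1 ≤ d_2 ≤ ⋯ ≤ d_m, we have |χ^k_m(d_1,…,d_m)| ≤ C(k+1, m+1) · d_1⋯d_{m-1} · d_m^{k-m+1}. -/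
/-- The Euler characteristic `χ^k_m(d_1,…,d_m)` of a non-singular complete intersection of
hypersurfaces of degrees `d 1, …, d m` in `ℙ^k_ℂ`, defined by its recursion. -/
def chi : ℕ → ℕ → (ℕ → ℤ) → ℤ
  | k, 0, _ => (k : ℤ) + 1
  | 0, _ + 1, _ => 0
  | k + 1, m + 1, d =>
    if m + 1 = k + 1 then ∏ i ∈ Finset.Icc 1 (m + 1), d i
    else d (m + 1) * chi k m d - (d (m + 1) - 1) * chi k (m + 1) d

/-!
Since `d_m ≥ 1`, the recursion gives `|χ^{k+1}_{m+1}| ≤ d_{m+1} |χ^k_m| + (d_{m+1} - 1) |χ^k_{m+1}|`.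
Bounding every `d_i` (`i ≤ m`) by a common `e ≥ 1`, this propagates the estimate
`|χ^k_m| ≤ C(k+1, m+1) · d_1⋯d_m · e^{k-m}` by induction on `k`, the binomial coefficients adding up
by Pascal's rule. Taking `e = d_m` gives the theorem.
-/

open Finset

theorem chi_zero_right (k : ℕ) (d : ℕ → ℤ) : chi k 0 d = k + 1 := by
  cases k <;> rfl

theorem chi_self (k : ℕ) (d : ℕ → ℤ) : chi k k d = ∏ i ∈ Icc 1 k, d i := by
  cases k <;> simp [chi]

theorem chi_succ_succ_of_lt {k m : ℕ} (h : m < k) (d : ℕ → ℤ) :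
    chi (k + 1) (m + 1) d = d (m + 1) * chi k m d - (d (m + 1) - 1) * chi k (m + 1) d := by
  rw [chi, if_neg (by omega)]

theorem abs_mul_sub_pred_mul_le {R : Type*} [Ring R] [LinearOrder R] [IsOrderedRing R]
    {D A B a b : R} (hD : 1 ≤ D) (hA : |A| ≤ a) (hB : |B| ≤ b) :
    |D * A - (D - 1) * B| ≤ D * a + (D - 1) * b := by
  have hD₀ : 0 ≤ D := zero_le_one.trans hD
  have hD₁ : 0 ≤ D - 1 := sub_nonneg.2 hD
  calc |D * A - (D - 1) * B| ≤ |D * A| + |(D - 1) * B| := abs_sub _ _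
    _ = D * |A| + (D - 1) * |B| := by rw [abs_mul, abs_mul, abs_of_nonneg hD₀, abs_of_nonneg hD₁]
    _ ≤ D * a + (D - 1) * b := by gcongr

theorem abs_chi_le {k m : ℕ} (hm : m ≤ k) {d : ℕ → ℤ} {e : ℤ} (he : 1 ≤ e)
    (hd : ∀ i ∈ Icc 1 m, 1 ≤ d i ∧ d i ≤ e) :
    |chi k m d| ≤ ((k + 1).choose (m + 1) : ℤ) * (∏ i ∈ Icc 1 m, d i) * e ^ (k - m) := by
  induction k generalizing m with
  | zero =>
    obtain rfl : m = 0 := by omega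
    simp [chi]
  | succ k ih =>
    rcases hm.eq_or_lt with rfl | hlt
    · rw [chi_self, abs_of_nonneg (prod_nonneg fun i hi => by have := (hd i hi).1; omega)]
      simp
    cases m with
    | zero =>
      rw [chi_zero_right, Nat.choose_one_right, Icc_eq_empty (by omega), prod_empty]
      push_cast
      rw [abs_of_nonneg (by positivity), mul_one]
      exact le_mul_of_one_le_right (by positivity) (one_le_pow₀ he)
    | succ m =>
      have hmk : m < k := by omega
      have hd' : ∀ i ∈ Icc 1 m, 1 ≤ d i ∧ d i ≤ e := fun i hi =>
        hd i (Icc_subset_Icc_right m.le_succ hi)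
      obtain ⟨hD, hDe⟩ := hd (m + 1) (by simp)
      have hP : 0 ≤ ∏ i ∈ Icc 1 m, d i := prod_nonneg fun i hi => by have := (hd' i hi).1; omega
      have hA := ih hmk.le hd'
      have hB := ih hmk hd
      rw [chi_succ_succ_of_lt hmk]
      refine (abs_mul_sub_pred_mul_le hD hA hB).trans ?_
      rw [prod_Icc_succ_top (by omega), Nat.choose_succ_succ (k + 1) (m + 1), Nat.cast_add,
        show k + 1 - (m + 1) = k - m by omega, show k - m = k - (m + 1) + 1 by omega, pow_succ]
      have hpred_le : (d (m + 1) - 1) * (((k + 1).choose (m + 2) : ℤ) * ((∏ i ∈ Icc 1 m, d i) *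
          d (m + 1)) * e ^ (k - (m + 1))) ≤ e * (((k + 1).choose (m + 2) : ℤ) *
          ((∏ i ∈ Icc 1 m, d i) * d (m + 1)) * e ^ (k - (m + 1))) :=
        mul_le_mul_of_nonneg_right (by omega) (by positivity)
      linear_combination hpred_le

theorem prod_Icc_one_le_prod_Icc_pred_mul {R : Type*} [CommMonoid R] [Preorder R] (d : ℕ → R)
    {m : ℕ} (h : 1 ≤ d m) : ∏ i ∈ Icc 1 m, d i ≤ (∏ i ∈ Icc 1 (m - 1), d i) * d m := by
  cases m with
  | zero => simpa using h
  | succ m => rw [prod_Icc_succ_top (by omega), Nat.add_sub_cancel]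

theorem stmt_0 (k m : ℕ) (hm : m ≤ k) (d : ℕ → ℤ)
    (hd1 : ∀ i, i ≤ m → 1 ≤ d i)
    (hmono : ∀ i j, i ≤ j → j ≤ m → d i ≤ d j) :
    |chi k m d| ≤
      ((k + 1).choose (m + 1) : ℤ) * (∏ i ∈ Finset.Icc 1 (m - 1), d i) *
        d m ^ (k - m + 1) := by
  have hdm : 1 ≤ d m := hd1 m le_rfl
  have hd : ∀ i ∈ Icc 1 m, 1 ≤ d i ∧ d i ≤ d m := fun i hi =>
    ⟨hd1 i (mem_Icc.1 hi).2, hmono i m (mem_Icc.1 hi).2 le_rfl⟩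
  calc |chi k m d| ≤ ((k + 1).choose (m + 1) : ℤ) * (∏ i ∈ Icc 1 m, d i) * d m ^ (k - m) :=
        abs_chi_le hm hdm hd
    _ ≤ ((k + 1).choose (m + 1) : ℤ) * ((∏ i ∈ Icc 1 (m - 1), d i) * d m) * d m ^ (k - m) := by
        gcongr
        exact prod_Icc_one_le_prod_Icc_pred_mul d hdm
    _ = ((k + 1).choose (m + 1) : ℤ) * (∏ i ∈ Icc 1 (m - 1), d i) * d m ^ (k - m + 1) := by
        ring
end

section
/- The number of connected components of the complement of an arrangement of n hyperplanes in general position in R^{k} equals ∑_{i=0}^{k} C(n, i). -/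
/-!
On the complement of the arrangement the sign vector `x ↦ (c i < f i x)ᵢ` is locally constant
and its fibres, the cells, are convex, so connected components correspond to realisable sign
vectors. These are counted by deletion–restriction along `H₀ = {f 0 = c 0}`: a realisable sign
vector of the remaining hyperplanes extends in two ways if its cell meets `H₀`, and in one way
otherwise. The cells meeting `H₀` are the cells of the arrangement induced on `H₀ ≅ ker (f 0)`,
again in general position, one dimension lower. So the count `r(n, k)` satisfies Pascal's
recursion `r(n + 1, k + 1) = r(n, k + 1) + r(n, k)` of `∑_{i ≤ k} C(n, i)`.
-/

open Finset Set Module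

noncomputable def connectedComponentsEquivRange {X β : Type*} [TopologicalSpace X] {s : X → β}
    (hs : IsLocallyConstant s) (hfib : ∀ b, IsPreconnected (s ⁻¹' {b})) :
    ConnectedComponents X ≃ range s :=
  (Quotient.congrRight (r := connectedComponentSetoid X) (r' := Setoid.ker s) fun x _ =>
    ⟨fun h => hs.apply_eq_of_isPreconnected isPreconnected_connectedComponent
        (connectedComponent_eq_iff_mem.1 h) mem_connectedComponent,
      fun h => connectedComponent_eq ((hfib (s x)).subset_connectedComponent rfl h.symm)⟩).trans
  (Setoid.quotientKerEquivRange s)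

theorem Nat.sum_range_choose_succ_succ (n k : ℕ) :
    ∑ i ∈ range (k + 2), (n + 1).choose i =
      ∑ i ∈ range (k + 2), n.choose i + ∑ i ∈ range (k + 1), n.choose i := by
  rw [sum_range_succ' _ (k + 1), sum_range_succ' (fun i => n.choose i) (k + 1)]
  simp only [Nat.choose_succ_succ, sum_add_distrib, Nat.choose_zero_right]
  ring

theorem Fin.natCard_eq_natCard_exists_add_natCard_forall {n : ℕ} (R : Set (Fin (n + 1) → Bool)) :
    Nat.card R = Nat.card {τ : Fin n → Bool | ∃ b, (Fin.cons b τ : Fin (n + 1) → Bool) ∈ R} +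
      Nat.card {τ : Fin n → Bool | ∀ b, (Fin.cons b τ : Fin (n + 1) → Bool) ∈ R} := by
  classical
  have card_eq_sum {α : Type} [Fintype α] (S : Set α) :
      Nat.card S = ∑ a, if a ∈ S then 1 else 0 := by
    rw [Nat.card_eq_fintype_card, Fintype.card_subtype, card_filter]
  simp only [card_eq_sum, ← sum_add_distrib]
  rw [← (Fin.consEquiv fun _ => Bool).sum_comp, Fintype.sum_prod_type, sum_comm]
  refine sum_congr rfl fun τ _ => ?_
  rw [Fintype.sum_bool]
  by_cases htrue : (Fin.cons true τ : Fin (n + 1) → Bool) ∈ R <;>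
    by_cases hfalse : (Fin.cons false τ : Fin (n + 1) → Bool) ∈ R <;>
    simp [Fin.consEquiv, Bool.exists_bool, Bool.forall_bool, htrue, hfalse]

theorem LinearIndepOn.dualMap_subtype_ker {K ι V : Type*} [Field K] [AddCommGroup V] [Module K V]
    {f : ι → Module.Dual K V} {s : Set ι} {a : ι} (has : a ∉ s)
    (h : LinearIndepOn K f (insert a s)) :
    LinearIndepOn K (fun i => (LinearMap.ker (f a)).subtype.dualMap (f i)) s := by
  obtain ⟨hs, hfa⟩ := (linearIndepOn_insert has).1 h
  have hker : LinearMap.ker (LinearMap.ker (f a)).subtype.dualMap ≤ K ∙ f a := fun ψ hψ => by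
    have hle : ⨅ _ : Unit, LinearMap.ker (f a) ≤ LinearMap.ker ψ := fun x hx => by
      simpa using LinearMap.congr_fun hψ ⟨x, by simpa using hx⟩
    simpa using mem_span_of_iInf_ker_le_ker hle
  refine hs.map (Disjoint.mono_right hker ?_)
  rwa [← Set.image_eq_range, Submodule.disjoint_span_singleton' (h.ne_zero (mem_insert a s))]

namespace HyperplaneArrangement

variable {ι V : Type*} [AddCommGroup V] [Module ℝ V]

def side (b : Bool) (t : ℝ) : Set ℝ := if b then Ioi t else Iio t

noncomputable def signVector (f : ι → Dual ℝ V) (c : ι → ℝ) (x : V) : ι → Bool :=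
  fun i => decide (c i < f i x)

def cell (f : ι → Dual ℝ V) (c : ι → ℝ) (σ : ι → Bool) : Set V := ⋂ i, f i ⁻¹' side (σ i) (c i)

def regions (f : ι → Dual ℝ V) (c : ι → ℝ) : Set (ι → Bool) := {σ | (cell f c σ).Nonempty}

theorem mem_side {a t : ℝ} {b : Bool} : a ∈ side b t ↔ a ≠ t ∧ decide (t < a) = b := by
  cases b
  · simp only [side, Bool.false_eq_true, ↓reduceIte, Set.mem_Iio, decide_eq_false_iff_not, not_lt]
    exact ⟨fun h => ⟨h.ne, h.le⟩, fun h => lt_of_le_of_ne h.2 h.1⟩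
  · simp [side, lt_iff_le_and_ne, ne_comm]

theorem isOpen_side (b : Bool) (t : ℝ) : IsOpen (side b t) := by
  cases b
  exacts [isOpen_Iio, isOpen_Ioi]

theorem convex_side (b : Bool) (t : ℝ) : Convex ℝ (side b t) := by
  cases b
  exacts [convex_Iio t, convex_Ioi t]

theorem add_mem_side_iff {a s t : ℝ} {b : Bool} : a + s ∈ side b t ↔ s ∈ side b (t - a) := by
  cases b
  · simp [side, lt_sub_iff_add_lt']
  · simp [side, sub_lt_iff_lt_add']

variable {f : ι → Dual ℝ V} {c : ι → ℝ} {σ : ι → Bool} {x : V}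

@[simp]
theorem mem_cell : x ∈ cell f c σ ↔ ∀ i, f i x ∈ side (σ i) (c i) := by
  simp [cell]

theorem mem_cell_iff_signVector :
    x ∈ cell f c σ ↔ (∀ i, f i x ≠ c i) ∧ signVector f c x = σ := by
  simp [mem_side, forall_and, funext_iff, signVector]

theorem convex_cell (f : ι → Dual ℝ V) (c : ι → ℝ) (σ : ι → Bool) : Convex ℝ (cell f c σ) :=
  convex_iInter fun i => (convex_side (σ i) (c i)).linear_preimage (f i)

theorem isOpen_cell [TopologicalSpace V] [Finite ι] (hf : ∀ i, Continuous (f i)) (σ : ι → Bool) :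
    IsOpen (cell f c σ) :=
  isOpen_iInter_of_finite fun i => (isOpen_side (σ i) (c i)).preimage (hf i)

theorem natCard_connectedComponents_eq [TopologicalSpace V] [IsTopologicalAddGroup V]
    [ContinuousSMul ℝ V] [Finite ι] (hf : ∀ i, Continuous (f i)) :
    Nat.card (ConnectedComponents {x : V | ∀ i, f i x ≠ c i}) = Nat.card (regions f c) := by
  set U := {x : V | ∀ i, f i x ≠ c i}
  have fiber (σ : ι → Bool) : (fun x : U => signVector f c x) ⁻¹' {σ} = (↑) ⁻¹' cell f c σ := by
    ext x
    simp only [Set.mem_preimage, Set.mem_singleton_iff, mem_cell_iff_signVector]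
    exact (and_iff_right x.2).symm
  have hs : IsLocallyConstant (fun x : U => signVector f c x) :=
    (IsLocallyConstant.iff_isOpen_fiber).2 fun σ => fiber σ ▸
      (isOpen_cell hf σ).preimage continuous_subtype_val
  have hfib (σ : ι → Bool) : IsPreconnected ((fun x : U => signVector f c x) ⁻¹' {σ}) := by
    have hsub : cell f c σ ⊆ U := fun x hx => (mem_cell_iff_signVector.1 hx).1
    rw [fiber, ← Topology.IsInducing.subtypeVal.isPreconnected_image, Subtype.image_preimage_coe,
      Set.inter_eq_right.2 hsub]
    exact (convex_cell f c σ).isPreconnected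
  have hrange : range (fun x : U => signVector f c x) = regions f c := by
    ext σ
    simp only [Set.mem_range, Subtype.exists, regions, Set.Nonempty, mem_cell_iff_signVector]
    exact ⟨fun ⟨x, hx, h⟩ => ⟨x, hx, h⟩, fun ⟨x, hx, h⟩ => ⟨x, hx, h⟩⟩
  rw [Nat.card_congr (connectedComponentsEquivRange hs hfib), hrange]

theorem mem_closure_side (b : Bool) (t : ℝ) : t ∈ closure (side b t) := by
  cases b <;> simp [side]

theorem add_smul_mem_cell_iff {v : V} {t : ℝ} :
    x + t • v ∈ cell f c σ ↔ ∀ i, f i x + t * f i v ∈ side (σ i) (c i) := by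
  simp

theorem exists_side_add_smul_mem_cell [Finite ι] (hx : x ∈ cell f c σ) (v : V) (b : Bool) :
    ∃ t ∈ side b 0, x + t • v ∈ cell f c σ := by
  have hopen : IsOpen {t : ℝ | x + t • v ∈ cell f c σ} := by
    simp only [add_smul_mem_cell_iff, Set.ofPred_forall]
    exact isOpen_iInter_of_finite fun i => (isOpen_side _ _).preimage (by fun_prop)
  have hnhds : ∀ᶠ t in nhds (0 : ℝ), x + t • v ∈ cell f c σ := hopen.mem_nhds (by simpa using hx)
  exact ((mem_closure_iff_frequently.1 (mem_closure_side b 0)).and_eventually hnhds).exists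

section Cons

variable {n : ℕ} {f : Fin (n + 1) → Dual ℝ V} {c : Fin (n + 1) → ℝ} {τ : Fin n → Bool}

theorem cell_cons (f : Fin (n + 1) → Dual ℝ V) (c : Fin (n + 1) → ℝ) (b : Bool)
    (τ : Fin n → Bool) :
    cell f c (Fin.cons b τ) = f 0 ⁻¹' side b (c 0) ∩ cell (Fin.tail f) (Fin.tail c) τ := by
  ext x
  simp [Fin.forall_fin_succ, Fin.tail]

theorem cell_cons_nonempty_of_mem_cell_tail (hf0 : f 0 ≠ 0)
    (hx : x ∈ cell (Fin.tail f) (Fin.tail c) τ) (hx0 : f 0 x = c 0) (b : Bool) :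
    (cell f c (Fin.cons b τ)).Nonempty := by
  obtain ⟨v, hv⟩ := (f 0).surjective hf0 1
  obtain ⟨t, ht, hxt⟩ := exists_side_add_smul_mem_cell hx v b
  rw [cell_cons]
  refine ⟨x + t • v, ?_, hxt⟩
  simpa [hv, hx0, add_mem_side_iff] using ht

theorem exists_mem_cell_tail_of_cons_nonempty (htrue : (cell f c (Fin.cons true τ)).Nonempty)
    (hfalse : (cell f c (Fin.cons false τ)).Nonempty) :
    ∃ x ∈ cell (Fin.tail f) (Fin.tail c) τ, f 0 x = c 0 := by
  obtain ⟨x, hx0, hx⟩ := cell_cons f c true τ ▸ htrue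
  obtain ⟨y, hy0, hy⟩ := cell_cons f c false τ ▸ hfalse
  have hconv := convex_iff_ordConnected.1
    ((convex_cell (Fin.tail f) (Fin.tail c) τ).linear_image (f 0))
  exact hconv.out (mem_image_of_mem _ hy) (mem_image_of_mem _ hx)
    ⟨le_of_lt (by simpa [side] using hy0), le_of_lt (by simpa [side] using hx0)⟩

theorem natCard_regions_succ (hf0 : f 0 ≠ 0) :
    Nat.card (regions f c) = Nat.card (regions (Fin.tail f) (Fin.tail c)) +
      Nat.card {τ : Fin n → Bool | ∃ x ∈ cell (Fin.tail f) (Fin.tail c) τ, f 0 x = c 0} := by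
  rw [Fin.natCard_eq_natCard_exists_add_natCard_forall]
  congr 3
  · ext τ
    refine ⟨fun ⟨b, x, hx⟩ => ⟨x, (cell_cons f c b τ ▸ hx).2⟩, fun ⟨x, hx⟩ => ?_⟩
    by_cases hx0 : f 0 x = c 0
    · exact ⟨true, cell_cons_nonempty_of_mem_cell_tail hf0 hx hx0 true⟩
    · exact ⟨decide (c 0 < f 0 x), x, cell_cons f c _ τ ▸ ⟨mem_side.2 ⟨hx0, rfl⟩, hx⟩⟩
  · ext τ
    refine ⟨fun h => exists_mem_cell_tail_of_cons_nonempty (h true) (h false),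
      fun ⟨x, hx, hx0⟩ b => cell_cons_nonempty_of_mem_cell_tail hf0 hx hx0 b⟩

end Cons

theorem mem_cell_restrict {W : Submodule ℝ V} {x₀ : V} {v : W} :
    v ∈ cell (fun i => W.subtype.dualMap (f i)) (fun i => c i - f i x₀) σ ↔
      x₀ + v ∈ cell f c σ := by
  simp [add_mem_side_iff]

theorem regions_restrict {φ : Dual ℝ V} {a : ℝ} {x₀ : V} (hx₀ : φ x₀ = a) :
    {σ | ∃ x ∈ cell f c σ, φ x = a} =
      regions (fun i => (LinearMap.ker φ).subtype.dualMap (f i)) (fun i => c i - f i x₀) := by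
  ext σ
  refine ⟨fun ⟨x, hx, hφx⟩ => ⟨⟨x - x₀, by simp [hφx, hx₀]⟩, ?_⟩, fun ⟨v, hv⟩ => ?_⟩
  · exact mem_cell_restrict.2 (by rwa [add_sub_cancel])
  · refine ⟨x₀ + v, mem_cell_restrict.1 hv, ?_⟩
    simp [hx₀]

theorem regions_of_isEmpty [IsEmpty ι] : regions f c = univ :=
  Set.eq_univ_of_forall fun σ => ⟨0, by simp⟩

theorem regions_of_subsingleton [Subsingleton V] (hc : ∀ i, c i ≠ 0) :
    regions f c = {signVector f c 0} := by
  ext σ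
  simp only [regions, Set.mem_ofPred_eq, Set.mem_singleton_iff]
  refine ⟨fun ⟨x, hx⟩ => ?_,
    fun h => ⟨0, mem_cell_iff_signVector.2 ⟨by simpa [eq_comm] using hc, h.symm⟩⟩⟩
  rw [Subsingleton.elim x 0, mem_cell_iff_signVector] at hx
  exact hx.2.symm

structure IsGeneralPosition (k : ℕ) (f : ι → Dual ℝ V) (c : ι → ℝ) : Prop where
  linearIndepOn : ∀ S : Finset ι, #S ≤ k → LinearIndepOn ℝ f (S : Set ι)
  exists_common : ∀ S : Finset ι, #S ≤ k → ∃ x, ∀ i ∈ S, f i x = c i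
  not_exists_common : ∀ S : Finset ι, #S = k + 1 → ¬ ∃ x, ∀ i ∈ S, f i x = c i

theorem IsGeneralPosition.comp_embedding {ι' : Type*} {k : ℕ} (h : IsGeneralPosition k f c)
    (e : ι' ↪ ι) : IsGeneralPosition k (f ∘ e) (c ∘ e) where
  linearIndepOn S hS :=
    (coe_map e S ▸ h.linearIndepOn (S.map e) (by simpa)).comp_of_image e.injective.injOn
  exists_common S hS := by
    obtain ⟨x, hx⟩ := h.exists_common (S.map e) (by simpa)
    exact ⟨x, fun i hi => hx (e i) (mem_map_of_mem e hi)⟩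
  not_exists_common S hS := fun ⟨x, hx⟩ =>
    h.not_exists_common (S.map e) (by simpa) ⟨x, by simpa using hx⟩

theorem exists_common_restrict_iff [DecidableEq ι] {ι' : Type*} {e : ι' ↪ ι} {a : ι} {x₀ : V}
    (hx₀ : f a x₀ = c a) (S : Finset ι') :
    (∃ v : LinearMap.ker (f a), ∀ i ∈ S,
        (LinearMap.ker (f a)).subtype.dualMap (f (e i)) v = c (e i) - f (e i) x₀) ↔
      ∃ x, ∀ j ∈ insert a (S.map e), f j x = c j := by
  simp only [Finset.mem_insert, forall_eq_or_imp, forall_mem_map]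
  refine ⟨fun ⟨v, hv⟩ => ⟨x₀ + v, ?_, fun i hi => ?_⟩, fun ⟨x, hxa, hx⟩ => ⟨⟨x - x₀, ?_⟩, ?_⟩⟩
  · simp [hx₀]
  · have := hv i hi
    simp only [LinearMap.dualMap_apply, Submodule.coe_subtype] at this
    simp [this]
  · simp [hxa, hx₀]
  · simpa using hx

theorem IsGeneralPosition.restrict [DecidableEq ι] {ι' : Type*} {k : ℕ}
    (h : IsGeneralPosition (k + 1) f c) (e : ι' ↪ ι) {a : ι} (hea : ∀ i, e i ≠ a) {x₀ : V}
    (hx₀ : f a x₀ = c a) :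
    IsGeneralPosition k (fun i => (LinearMap.ker (f a)).subtype.dualMap (f (e i)))
      (fun i => c (e i) - f (e i) x₀) := by
  have card_insert (S : Finset ι') : #(insert a (S.map e)) = #S + 1 := by
    rw [card_insert_of_notMem (by simpa using fun i _ => hea i), card_map]
  refine ⟨fun S hS => ?_, fun S hS => ?_, fun S hS => ?_⟩
  · have hind := h.linearIndepOn (insert a (S.map e)) (by rw [card_insert]; omega)
    rw [coe_insert, coe_map] at hind
    exact (hind.dualMap_subtype_ker (by simpa using fun i _ => hea i)).comp_of_image
      e.injective.injOn
  · exact (exists_common_restrict_iff hx₀ S).2 (h.exists_common _ (by rw [card_insert]; omega))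
  · rw [exists_common_restrict_iff hx₀ S]
    exact h.not_exists_common _ (by rw [card_insert, hS])

theorem natCard_regions_of_isGeneralPosition [FiniteDimensional ℝ V] {n k : ℕ}
    {f : Fin n → Dual ℝ V} {c : Fin n → ℝ} (hV : finrank ℝ V = k) (h : IsGeneralPosition k f c) :
    Nat.card (regions f c) = ∑ i ∈ range (k + 1), n.choose i := by
  induction n generalizing V k with
  | zero => simp [regions_of_isEmpty, sum_range_succ']
  | succ n ih =>
    cases k with
    | zero =>
      have : Subsingleton V := finrank_zero_iff.1 hV
      have hc (i : Fin (n + 1)) : c i ≠ 0 := fun hci =>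
        h.not_exists_common {i} rfl ⟨0, by simp [hci]⟩
      simp [regions_of_subsingleton hc]
    | succ k =>
      have hf0 : f 0 ≠ 0 := (h.linearIndepOn {0} (by simp)).ne_zero (by simp)
      obtain ⟨x₀, hx₀⟩ := h.exists_common {0} (by simp)
      have hx₀ : f 0 x₀ = c 0 := hx₀ 0 (by simp)
      have hker : finrank ℝ (LinearMap.ker (f 0)) = k := by
        have := Dual.finrank_ker_add_one_of_ne_zero hf0
        omega
      rw [natCard_regions_succ hf0, regions_restrict hx₀, Nat.sum_range_choose_succ_succ]
      exact congr_arg₂ (· + ·) (ih hV (h.comp_embedding (Fin.succEmb n)))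
        (ih hker (h.restrict (Fin.succEmb n) Fin.succ_ne_zero hx₀))

end HyperplaneArrangement

open HyperplaneArrangement in
/-- The number of connected components of the complement of an arrangement of `n` hyperplanes
in general position in `ℝ^k` equals `∑_{i=0}^{k} C(n, i)`.  The `i`-th hyperplane is
`{x | f i x = c i}`; general position says that any `j ≤ k` of the affine hyperplanes
intersect in an affine subspace of dimension `k − j` (the corresponding linear functionals
are linearly independent and the affine equations are simultaneously solvable), and no
`k + 1` of them have a common point. -/
theorem stmt_5 (k n : ℕ) (f : Fin n → (EuclideanSpace ℝ (Fin k) →ₗ[ℝ] ℝ)) (c : Fin n → ℝ)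
    (hgen : ∀ S : Finset (Fin n), S.card ≤ k →
      LinearIndependent ℝ (fun i : S => f i) ∧ ∃ x, ∀ i ∈ S, f i x = c i)
    (hempty : ∀ S : Finset (Fin n), S.card = k + 1 → ¬ ∃ x, ∀ i ∈ S, f i x = c i) :
    Nat.card (ConnectedComponents
        ({x : EuclideanSpace ℝ (Fin k) | ∀ i, f i x ≠ c i} : Set (EuclideanSpace ℝ (Fin k)))) =
      ∑ i ∈ Finset.range (k + 1), n.choose i := by
  rw [natCard_connectedComponents_eq fun i => (f i).continuous_of_finiteDimensional]
  exact natCard_regions_of_isGeneralPosition finrank_euclideanSpace_fin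
    ⟨fun S hS => (hgen S hS).1, fun S hS => (hgen S hS).2, hempty⟩
end

section
/- Fix 1 ≤ j ≤ k and ε > 0. For 0 ≤ m ≤ k(k−j), let ℓ_{mε} ⊂ R^k be the (k−j)-dimensional subspace spanned by the moment-curve vectors v_k(mε), v_k(mε+1), …, v_k(mε+k−j−1), where v_k(x) = (1, x, x^2, …, x^{k-1}). Then for every j-dimensional linear subspace ℓ' of R^k there exists m with 0 ≤ m ≤ k(k−j) such that ℓ' ∩ ℓ_{mε} = {0}. -/
/-!
Let `A : ℝ^k → ℝ^(k-j)` be a surjection with kernel `ℓ'` and let `p_s(x)` be the `s`-th coordinate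
of `A (1, x, …, x^(k-1))`, a polynomial of degree `< k`. The `p_s` are linearly independent, and
`ℓ'` meets `ℓ_x = span {v(x), …, v(x+k-j-1)}` trivially as soon as the Casoratian
`det [p_s(x + r)]` is nonzero. The Casoratian is a polynomial of degree `≤ (k-j)(k-1) ≤ k(k-j)`,
so it suffices that it is not identically zero: then one of the `k(k-j)+1` points `mε` is not
a root. Column operations turn the shifts `p_s(x + r)` into forward differences `Δ^r p_s`.
Replacing the `p_s` by a basis `f_s` of their span with distinct degrees `d_s` multiplies the
Casoratian by a constant, and the top coefficient of `det [Δ^r f_s]` is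
`∏ lc(f_s) · det [d_s (d_s - 1) ⋯ (d_s - r + 1)]`, a nonzero Vandermonde determinant.
-/

open Finset Matrix Module Polynomial

theorem Matrix.det_descFactorial_ne_zero {R : Type*} [CommRing R] [IsDomain R] [CharZero R] {n : ℕ}
    {a : Fin n → ℕ} (ha : Function.Injective a) :
    (Matrix.of fun s i : Fin n => ((a s).descFactorial i : R)).det ≠ 0 := by
  have hvdm := det_eval_matrixOfPolynomials_eq_det_vandermonde (fun s => (a s : R))
    (fun i => descPochhammer R i) (fun i => descPochhammer_natDegree R i)
    (fun i => monic_descPochhammer R i)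
  simp only [descPochhammer_eval_eq_descFactorial] at hvdm
  rw [← hvdm, det_vandermonde_ne_zero_iff]
  exact Nat.cast_injective.comp ha

namespace Polynomial

variable {R : Type*} [CommRing R]

theorem coeff_prod_sum_of_natDegree_le {ι : Type*} (s : Finset ι) (f : ι → R[X]) (e : ι → ℕ)
    (h : ∀ i ∈ s, (f i).natDegree ≤ e i) :
    (∏ i ∈ s, f i).coeff (∑ i ∈ s, e i) = ∏ i ∈ s, (f i).coeff (e i) := by
  classical
  induction s using Finset.induction_on with
  | empty => simp
  | insert a s ha ih =>
    rw [prod_insert ha, sum_insert ha, prod_insert ha,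
      coeff_mul_add_eq_of_natDegree_le (h a (mem_insert_self a s))
        ((natDegree_prod_le s f).trans (sum_le_sum fun i hi => h i (mem_insert_of_mem hi))),
      ih fun i hi => h i (mem_insert_of_mem hi)]

section RowDegrees

variable {ι : Type*} [Fintype ι] [DecidableEq ι] (M : Matrix ι ι R[X]) (a : ι → ℕ)

theorem natDegree_det_le_sum (h : ∀ s i, (M s i).natDegree ≤ a s) :
    M.det.natDegree ≤ ∑ s, a s := by
  rw [det_apply]
  refine natDegree_sum_le_of_forall_le _ _ fun σ _ => ?_
  rw [← Equiv.sum_comp σ a]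
  exact (natDegree_smul_le _ _).trans
    ((natDegree_prod_le _ _).trans (sum_le_sum fun i _ => h (σ i) i))

theorem coeff_det_sum_of_natDegree_le (h : ∀ s i, (M s i).natDegree ≤ a s) :
    M.det.coeff (∑ s, a s) = (Matrix.of fun s i => (M s i).coeff (a s)).det := by
  simp only [det_apply, finsetSum_coeff, of_apply]
  refine sum_congr rfl fun σ _ => ?_
  rw [← Equiv.sum_comp σ a, coeff_smul, coeff_prod_sum_of_natDegree_le _ _ _ fun i _ => h (σ i) i]

end RowDegrees

noncomputable def forwardDiff : Module.End R R[X] := taylor 1 - 1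

theorem forwardDiff_apply (g : R[X]) : forwardDiff g = taylor 1 g - g := rfl

@[simp]
theorem forwardDiff_C (c : R) : forwardDiff (C c) = 0 := by
  rw [forwardDiff_apply, taylor_C, sub_self]

theorem taylor_natCast_eq_sum (g : R[X]) {r N : ℕ} (hr : r < N) :
    taylor (r : R) g = ∑ i ∈ range N, (r.choose i : R) • (forwardDiff ^ i) g := by
  have htaylor : ∀ r : ℕ, taylor (r : R) = (forwardDiff + 1) ^ r := by
    intro r
    induction r with
    | zero => rw [Nat.cast_zero, pow_zero, taylor_zero', Module.End.one_eq_id]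
    | succ r ih =>
      refine LinearMap.ext fun g => ?_
      rw [pow_succ', Module.End.mul_apply, ← ih, forwardDiff, sub_add_cancel,
        taylor_taylor, Nat.cast_succ, add_comm]
  rw [htaylor, (Commute.one_right (forwardDiff : Module.End R R[X])).add_pow r,
    LinearMap.sum_apply]
  refine (Finset.sum_subset (fun i => by simp only [mem_range]; omega) fun i _ hi => ?_).trans
    (Finset.sum_congr rfl fun i _ => ?_)
  · simp only [mem_range, not_lt] at hi
    rw [Nat.choose_eq_zero_of_lt (by omega), Nat.cast_zero, mul_zero, LinearMap.zero_apply]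
  · rw [one_pow, mul_one, Module.End.mul_apply, Module.End.natCast_apply, map_nsmul,
      Nat.cast_smul_eq_nsmul]

theorem coeff_forwardDiff (g : R[X]) {N : ℕ} (hg : g.natDegree ≤ N) (m : ℕ) :
    (forwardDiff g).coeff m =
      ∑ e ∈ range N, ((e + 1 + m).choose m : R) * g.coeff (e + 1 + m) := by
  have hdeg : (hasseDeriv m g).natDegree < N + 1 :=
    (natDegree_hasseDeriv_le g m).trans_lt (by omega)
  rw [forwardDiff_apply, coeff_sub, taylor_coeff, eval_eq_sum_range' hdeg, sum_range_succ']
  simp [hasseDeriv_coeff]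

theorem coeff_forwardDiff_eq_zero {g : R[X]} {m : ℕ} (hg : g.natDegree ≤ m) :
    (forwardDiff g).coeff m = 0 := by
  rw [coeff_forwardDiff g hg]
  exact sum_eq_zero fun e _ => by rw [coeff_eq_zero_of_natDegree_lt (by omega), mul_zero]

theorem natDegree_forwardDiff_le (g : R[X]) :
    (forwardDiff g).natDegree ≤ g.natDegree - 1 :=
  natDegree_le_iff_coeff_eq_zero.mpr fun _ hm => coeff_forwardDiff_eq_zero (by omega)

theorem coeff_forwardDiff_of_natDegree_le_succ {g : R[X]} {d : ℕ} (hg : g.natDegree ≤ d + 1) :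
    (forwardDiff g).coeff d = (d + 1) * g.coeff (d + 1) := by
  rw [coeff_forwardDiff g hg, sum_range_succ', sum_eq_zero]
  · simp [Nat.choose_succ_self_right, add_comm]
  · intro e _
    rw [coeff_eq_zero_of_natDegree_lt (by omega), mul_zero]

theorem natDegree_forwardDiff_pow_le (g : R[X]) (i : ℕ) :
    ((forwardDiff ^ i) g).natDegree ≤ g.natDegree - i := by
  induction i with
  | zero => simp
  | succ i ih =>
    rw [pow_succ', Module.End.mul_apply]
    exact (natDegree_forwardDiff_le _).trans (by omega)

theorem forwardDiff_pow_eq_zero {g : R[X]} {i : ℕ} (hi : g.natDegree < i) :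
    (forwardDiff ^ i) g = 0 := by
  obtain ⟨i, rfl⟩ := Nat.exists_eq_add_of_lt hi
  rw [pow_succ', Module.End.mul_apply,
    eq_C_of_natDegree_le_zero ((natDegree_forwardDiff_pow_le g _).trans (by omega)),
    forwardDiff_C]

theorem coeff_forwardDiff_pow {g : R[X]} {d i : ℕ} (hg : g.natDegree ≤ d + i) :
    ((forwardDiff ^ i) g).coeff d = (d + i).descFactorial i * g.coeff (d + i) := by
  induction i generalizing g with
  | zero => simp
  | succ i ih =>
    rw [pow_succ, Module.End.mul_apply,
      ih ((natDegree_forwardDiff_le g).trans (by omega)),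
      coeff_forwardDiff_of_natDegree_le_succ (by omega), ← add_assoc,
      Nat.succ_descFactorial_succ]
    push_cast
    ring

theorem natDegree_X_pow_mul_forwardDiff_pow_le (g : R[X]) (i : ℕ) :
    (X ^ i * (forwardDiff ^ i) g).natDegree ≤ g.natDegree := by
  rcases le_or_gt i g.natDegree with hi | hi
  · have hdiff := natDegree_forwardDiff_pow_le g i
    have hX := natDegree_X_pow_le (R := R) i
    exact natDegree_mul_le.trans (by omega)
  · simp [forwardDiff_pow_eq_zero hi]

theorem coeff_X_pow_mul_forwardDiff_pow (g : R[X]) (i : ℕ) :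
    (X ^ i * (forwardDiff ^ i) g).coeff g.natDegree =
      g.leadingCoeff * g.natDegree.descFactorial i := by
  rcases le_or_gt i g.natDegree with hi | hi
  · obtain ⟨d, hd⟩ := Nat.exists_eq_add_of_le' hi
    rw [hd, coeff_X_pow_mul, coeff_forwardDiff_pow hd.le, leadingCoeff, hd, mul_comm]
  · simp [forwardDiff_pow_eq_zero hi, Nat.descFactorial_eq_zero_iff_lt.mpr hi]

noncomputable def casoratian {n : ℕ} (p : Fin n → R[X]) : R[X] :=
  (Matrix.of fun s r : Fin n => taylor ((r : ℕ) : R) (p s)).det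

theorem eval_casoratian {n : ℕ} (p : Fin n → R[X]) (x : R) :
    (casoratian p).eval x = (Matrix.of fun s r : Fin n => (p s).eval (x + (r : ℕ))).det := by
  rw [casoratian, ← coe_evalRingHom, RingHom.map_det]
  congr 1
  ext s r
  simp [taylor_eval]

theorem natDegree_casoratian_le {n d : ℕ} {p : Fin n → R[X]} (hp : ∀ s, (p s).natDegree ≤ d) :
    (casoratian p).natDegree ≤ n * d := by
  unfold casoratian
  simpa using natDegree_det_le_sum (Matrix.of fun s r : Fin n => taylor ((r : ℕ) : R) (p s))
    (fun _ => d) fun s r => by simpa using hp s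

theorem casoratian_eq_det_forwardDiff {n : ℕ} (p : Fin n → R[X]) :
    casoratian p = (Matrix.of fun s i : Fin n => (forwardDiff ^ (i : ℕ)) (p s)).det := by
  have hfactor : (Matrix.of fun s r : Fin n => taylor ((r : ℕ) : R) (p s)) =
      (Matrix.of fun s i : Fin n => (forwardDiff ^ (i : ℕ)) (p s)) *
        Matrix.of fun i r : Fin n => C ((r : ℕ).choose i : R) := by
    refine Matrix.ext fun s r => ?_
    rw [of_apply, mul_apply, taylor_natCast_eq_sum _ r.isLt,
      ← Fin.sum_univ_eq_sum_range (fun i => ((r : ℕ).choose i : R) • (forwardDiff ^ i) (p s))]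
    refine Finset.sum_congr rfl fun i _ => ?_
    rw [of_apply, of_apply, smul_eq_C_mul, mul_comm]
  have htri : (Matrix.of fun i r : Fin n => C ((r : ℕ).choose i : R)).BlockTriangular id :=
    fun i r hri => by
      rw [of_apply, Nat.choose_eq_zero_of_lt (show (r : ℕ) < i from hri), Nat.cast_zero, C_0]
  rw [casoratian, hfactor, det_mul, det_of_isUpperTriangular htri]
  simp

theorem casoratian_ne_zero_of_natDegree_injective [IsDomain R] [CharZero R] {n : ℕ}
    {p : Fin n → R[X]} (hp0 : ∀ s, p s ≠ 0) (hp : Function.Injective fun s => (p s).natDegree) :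
    casoratian p ≠ 0 := by
  intro hcas
  rw [casoratian_eq_det_forwardDiff] at hcas
  -- Scaling column `i` by `X ^ i` bounds the degrees of row `s` by `(p s).natDegree`; the
  -- coefficient at the sum of these bounds is then a nonzero multiple of a Vandermonde determinant.
  set D := Matrix.of fun s i : Fin n => (forwardDiff ^ (i : ℕ)) (p s)
  have hcoeff := coeff_det_sum_of_natDegree_le (Matrix.of fun s i : Fin n => X ^ (i : ℕ) * D s i)
    (fun s => (p s).natDegree) fun s i => natDegree_X_pow_mul_forwardDiff_pow_le (p s) i
  rw [det_mul_row (fun i : Fin n => (X : R[X]) ^ (i : ℕ)) D, hcas, mul_zero, coeff_zero] at hcoeff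
  simp only [of_apply, D, coeff_X_pow_mul_forwardDiff_pow] at hcoeff
  have hrows := det_mul_column (fun s => (p s).leadingCoeff)
    (Matrix.of fun s i : Fin n => ((p s).natDegree.descFactorial i : R))
  simp only [of_apply] at hrows
  rw [hrows] at hcoeff
  exact mul_ne_zero (prod_ne_zero_iff.mpr fun s _ => leadingCoeff_ne_zero.mpr (hp0 s))
    (det_descFactorial_ne_zero hp) hcoeff.symm

theorem casoratian_sum_smul {n : ℕ} (p : Fin n → R[X]) (B : Matrix (Fin n) (Fin n) R) :
    casoratian (fun s => ∑ t, B s t • p t) = C B.det * casoratian p := by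
  rw [casoratian, casoratian, RingHom.map_det, ← det_mul]
  congr 1
  ext s r
  simp [mul_apply, smul_eq_C_mul]

section Field

variable {K : Type*} [Field K]

theorem exists_natDegree_le_of_finiteDimensional (V : Submodule K K[X]) [FiniteDimensional K V] :
    ∃ N, ∀ f ∈ V, f.natDegree ≤ N := by
  obtain ⟨S, hS⟩ := (Submodule.fg_iff_finiteDimensional V).mpr ‹_›
  have hle : V ≤ degreeLE K (S.sup natDegree : ℕ) := hS ▸ Submodule.span_le.mpr fun g hg =>
    mem_degreeLE.mpr (degree_le_of_natDegree_le (le_sup hg))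
  exact ⟨_, fun f hf => natDegree_le_of_degree_le (mem_degreeLE.mp (hle hf))⟩

theorem exists_natDegree_injective (V : Submodule K K[X]) [FiniteDimensional K V] {n : ℕ}
    (hV : finrank K V = n) :
    ∃ f : Fin n → K[X], (∀ i, f i ∈ V ∧ f i ≠ 0) ∧ Function.Injective fun i => (f i).natDegree := by
  classical
  obtain ⟨N, hN⟩ := exists_natDegree_le_of_finiteDimensional V
  set D := (range (N + 1)).filter fun d => ∃ f ∈ V, f ≠ 0 ∧ f.natDegree = d
  -- A nonzero `v ∈ V` has a nonzero coefficient at `v.natDegree ∈ D`, so `φ` is injective.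
  let φ : V →ₗ[K] (D → K) := LinearMap.pi fun d => (lcoeff K d).comp V.subtype
  have hφ : Function.Injective φ := by
    refine (injective_iff_map_eq_zero φ).mpr fun v hv => ?_
    by_contra hv0
    have hv0' : (v : K[X]) ≠ 0 := by simpa using hv0
    have hmem : (v : K[X]).natDegree ∈ D :=
      mem_filter.mpr ⟨mem_range.mpr (Nat.lt_succ_of_le (hN v v.2)), v, v.2, hv0', rfl⟩
    have hcoeff := congr_fun hv ⟨_, hmem⟩
    simp only [φ, LinearMap.pi_apply, LinearMap.comp_apply, Submodule.subtype_apply, lcoeff_apply,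
      Pi.zero_apply] at hcoeff
    exact hv0' (leadingCoeff_eq_zero.mp hcoeff)
  have hcard : n ≤ #D := by
    simpa [hV] using LinearMap.finrank_le_finrank_of_injective hφ
  obtain ⟨S, hSD, hS⟩ := exists_subset_card_eq hcard
  choose f hfV hf0 hfd using fun d : S => (mem_filter.mp (hSD d.2)).2
  refine ⟨fun i => f (S.orderIsoOfFin hS i), fun i => ⟨hfV _, hf0 _⟩, fun i i' h => ?_⟩
  simp only [hfd] at h
  exact (S.orderIsoOfFin hS).injective (Subtype.ext h)

theorem casoratian_ne_zero [CharZero K] {n : ℕ} {p : Fin n → K[X]} (hp : LinearIndependent K p) :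
    casoratian p ≠ 0 := by
  have := FiniteDimensional.span_of_finite K (Set.finite_range p)
  obtain ⟨f, hf, hdeg⟩ := exists_natDegree_injective (Submodule.span K (Set.range p))
    ((finrank_span_eq_card hp).trans (Fintype.card_fin n))
  choose B hB using fun s => (Submodule.mem_span_range_iff_exists_fun K).mp (hf s).1
  have hf_eq : casoratian f = C (Matrix.of B).det * casoratian p := by
    rw [← casoratian_sum_smul]
    simp [hB]
  intro h
  exact casoratian_ne_zero_of_natDegree_injective (fun s => (hf s).2) hdeg
    (by rw [hf_eq, h, mul_zero])

end Field

theorem exists_eval_natCast_mul_ne_zero [IsDomain R] [CharZero R] {P : R[X]} (hP : P ≠ 0)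
    {N : ℕ} (hN : P.natDegree ≤ N) {ε : R} (hε : ε ≠ 0) : ∃ m ≤ N, P.eval (m * ε) ≠ 0 := by
  by_contra! h
  have hinj : Function.Injective fun m : Fin (N + 1) => (m : R) * ε := fun a b hab =>
    Fin.ext (Nat.cast_injective (mul_right_cancel₀ hε hab))
  exact hP (eq_zero_of_natDegree_lt_card_of_eval_eq_zero P hinj
    (fun m => h m (Nat.lt_succ_iff.mp m.isLt)) (by simpa using Nat.lt_succ_of_le hN))

theorem eval_ofFn [DecidableEq R] {k : ℕ} (v : Fin k → R) (x : R) :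
    (ofFn k v).eval x = v ⬝ᵥ fun i => x ^ (i : ℕ) := by
  simp [ofFn_eq_sum_monomial, eval_finsetSum, dotProduct]

theorem natDegree_ofFn_le [DecidableEq R] {k : ℕ} (v : Fin k → R) : (ofFn k v).natDegree ≤ k - 1 :=
  natDegree_le_iff_coeff_eq_zero.mpr fun _ hm => ofFn_coeff_eq_zero_of_ge v (by omega)

end Polynomial

theorem LinearMap.linearIndependent_toMatrix'_row {R m n : Type*} [CommRing R] [Fintype m]
    [DecidableEq m] [Fintype n] [DecidableEq n] {A : (m → R) →ₗ[R] (n → R)}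
    (hA : Function.Surjective A) : LinearIndependent R (LinearMap.toMatrix' A).row := by
  rw [← Matrix.vecMul_injective_iff]
  intro c c' h
  funext t
  obtain ⟨u, hu⟩ := hA (Pi.single t 1)
  have key : ∀ c : n → R, c t = (c ᵥ* LinearMap.toMatrix' A) ⬝ᵥ u := fun c => by
    rw [← dotProduct_mulVec, LinearMap.toMatrix'_mulVec, hu, dotProduct_single_one]
  simp only at h
  rw [key c, key c', h]

section Transversal

variable {K E : Type*} [Field K] [AddCommGroup E] [Module K E]

theorem Submodule.exists_surjective_ker_eq [FiniteDimensional K E] (U : Submodule K E) {n : ℕ}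
    (hn : finrank K U + n = finrank K E) :
    ∃ A : E →ₗ[K] (Fin n → K), Function.Surjective A ∧ LinearMap.ker A = U := by
  have hq : finrank K (E ⧸ U) = n := by
    have := U.finrank_quotient_add_finrank
    omega
  let b := Module.finBasisOfFinrankEq K (E ⧸ U) hq
  refine ⟨b.equivFun.toLinearMap ∘ₗ U.mkQ, b.equivFun.surjective.comp U.mkQ_surjective, ?_⟩
  rw [LinearEquiv.ker_comp, Submodule.ker_mkQ]

theorem Submodule.inf_span_eq_bot_of_det_ne_zero {n : ℕ} {U : Submodule K E}
    {A : E →ₗ[K] (Fin n → K)} (hU : U ≤ LinearMap.ker A) (w : Fin n → E)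
    (hw : (Matrix.of fun s r => A (w r) s).det ≠ 0) :
    U ⊓ Submodule.span K (Set.range w) = ⊥ := by
  have hli : LinearIndependent K (A ∘ w) := Matrix.linearIndependent_cols_iff_isUnit.mpr
    ((Matrix.isUnit_iff_isUnit_det _).mpr (isUnit_iff_ne_zero.mpr hw))
  exact disjoint_iff.mp ((Submodule.range_ker_disjoint hli).symm.mono_left hU)

end Transversal

theorem stmt_7_general (k j : ℕ) (ε : ℝ) (hε : 0 < ε)
    (ℓ' : Submodule ℝ (Fin k → ℝ)) (hℓ' : Module.finrank ℝ ℓ' = j) :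
    ∃ m ≤ k * (k - j),
      ℓ' ⊓ Submodule.span ℝ
          (Set.range (fun r : Fin (k - j) => fun i : Fin k => ((m : ℝ) * ε + r) ^ (i : ℕ))) = ⊥ := by
  have hjk : j ≤ k := hℓ' ▸ (Submodule.finrank_le ℓ').trans_eq (Module.finrank_fin_fun ℝ)
  obtain ⟨A, hA, hker⟩ :=
    ℓ'.exists_surjective_ker_eq (n := k - j) (by rw [hℓ', Module.finrank_fin_fun]; omega)
  set p : Fin (k - j) → ℝ[X] := fun s => ofFn k (LinearMap.toMatrix' A s)
  have hp : LinearIndependent ℝ p := (A.linearIndependent_toMatrix'_row hA).map' (ofFn k)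
    (LinearMap.ker_eq_bot.mpr (injective_ofFn k))
  have heval : ∀ s y, (p s).eval y = A (fun i => y ^ (i : ℕ)) s := fun s y => by
    rw [eval_ofFn, ← LinearMap.toMatrix'_mulVec A]
    rfl
  have hdeg : (casoratian p).natDegree ≤ k * (k - j) :=
    (natDegree_casoratian_le fun s => natDegree_ofFn_le _).trans
      (by rw [mul_comm]; exact Nat.mul_le_mul_right _ (Nat.sub_le k 1))
  obtain ⟨m, hm, hne⟩ := exists_eval_natCast_mul_ne_zero (casoratian_ne_zero hp) hdeg hε.ne'
  refine ⟨m, hm, Submodule.inf_span_eq_bot_of_det_ne_zero hker.ge _ ?_⟩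
  simpa only [eval_casoratian, heval] using hne

/-- For `1 ≤ j ≤ k` and `ε > 0`, the `k(k−j)+1` subspaces
`ℓ_{mε} = span{v_k(mε), v_k(mε+1), …, v_k(mε+k−j−1)}`, where `v_k(x) = (1, x, …, x^{k-1})`
is the moment curve, form a family transversal to every `j`-dimensional subspace of `ℝ^k`:
for every `j`-dimensional linear subspace `ℓ'` there exists `m ≤ k(k−j)` with
`ℓ' ∩ ℓ_{mε} = 0`. -/
theorem stmt_7 (k j : ℕ) (hj1 : 1 ≤ j) (hjk : j ≤ k) (ε : ℝ) (hε : 0 < ε)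
    (ℓ' : Submodule ℝ (Fin k → ℝ)) (hℓ' : Module.finrank ℝ ℓ' = j) :
    ∃ m ≤ k * (k - j),
      ℓ' ⊓ Submodule.span ℝ
          (Set.range (fun r : Fin (k - j) => fun i : Fin k => ((m : ℝ) * ε + r) ^ (i : ℕ))) = ⊥ :=
  stmt_7_general k j ε hε ℓ' hℓ'
end

section
/- Let 1 ≤ j ≤ k and for a (k−j)-dimensional linear subspace ℓ of R^k let Ω(ℓ) = { ℓ' ∈ Gr(k, j) : ℓ ∩ ℓ' ≠ {0} }. Then for any nonempty open subset U of the Grassmannian Gr(k, k−j), the intersection ⋂_{ℓ ∈ U} Ω(ℓ) is empty; i.e., for every j-dimensional subspace ℓ' there exists ℓ ∈ U with ℓ ∩ ℓ' = {0}. -/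
/-! Fix a basis `c` of `ℓ'`. A tuple `b` of length `k - j` spans a complement of `ℓ'` iff the
concatenated family `(b, c)` is linearly independent, i.e. iff a determinant depending
polynomially on `b` does not vanish. On the line from any tuple `b₀` to a basis `b₁` of a
complement of `ℓ'`, this determinant is a polynomial in the line parameter that is nonzero at
`b₁`, so it has finitely many roots. Hence such tuples are dense and meet every nonempty open `U`.
-/

open Polynomial Set Module Submodule

namespace Matrix

variable {n K : Type*} [Fintype n] [DecidableEq n] [Field K]

theorem finite_setOf_det_lineMap_eq_zero {A₀ A₁ : Matrix n n K} (h : A₁.det ≠ 0) :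
    {t : K | (AffineMap.lineMap A₀ A₁ t : Matrix n n K).det = 0}.Finite := by
  set p : K[X] := (A₀.map C + (X : K[X]) • (A₁ - A₀).map C).det
  have heval (t : K) : p.eval t = (AffineMap.lineMap A₀ A₁ t : Matrix n n K).det := by
    rw [← coe_evalRingHom, RingHom.map_det, AffineMap.lineMap_apply_module']
    congr 1
    ext i j
    simp [add_comm]
  have hp : p ≠ 0 := fun hp => h (by simpa [hp] using (heval 1).symm)
  simpa only [IsRoot.def, heval] using finite_setOfPred_isRoot hp

end Matrix

namespace Module.Basis

theorem span_range_subtype_comp {ι K E : Type*} [Semiring K] [AddCommMonoid E] [Module K E]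
    {W : Submodule K E} (b : Basis ι K W) : span K (range (W.subtype ∘ b)) = W := by
  rw [range_comp, span_image, b.span_eq, map_subtype_top]

variable {ι K E : Type*} [Fintype ι] [DecidableEq ι] [Field K] [AddCommGroup E] [Module K E]

theorem linearIndependent_iff_det_repr_ne_zero (B : Basis ι K E) {v : ι → E} :
    LinearIndependent K v ↔ (Matrix.of fun i => B.equivFun (v i)).det ≠ 0 := by
  rw [← B.equivFun.toLinearMap.linearIndependent_iff (LinearEquiv.ker _),
    ← isUnit_iff_ne_zero, ← Matrix.isUnit_iff_isUnit_det,
    ← Matrix.linearIndependent_rows_iff_isUnit]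
  rfl

theorem finite_setOf_not_linearIndependent_lineMap (B : Basis ι K E) (v₀ : ι → E) {v₁ : ι → E}
    (h : LinearIndependent K v₁) :
    {t : K | ¬LinearIndependent K (AffineMap.lineMap v₀ v₁ t : ι → E)}.Finite := by
  have hrows (t : K) :
      (Matrix.of fun i => B.equivFun ((AffineMap.lineMap v₀ v₁ t : ι → E) i)) =
        AffineMap.lineMap (Matrix.of fun i => B.equivFun (v₀ i))
          (Matrix.of fun i => B.equivFun (v₁ i)) t := by
    ext i j
    simp [AffineMap.lineMap_apply_module]
  simp only [B.linearIndependent_iff_det_repr_ne_zero, not_not, hrows] at h ⊢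
  exact Matrix.finite_setOf_det_lineMap_eq_zero h

end Module.Basis

variable {𝕜 E ι κ : Type*} [AddCommGroup E] [Fintype ι] [Fintype κ]

theorem exists_linearIndependent_sumElim [Field 𝕜] [Module 𝕜 E] [FiniteDimensional 𝕜 E]
    {c : κ → E} (hc : LinearIndependent 𝕜 c)
    (hcard : Fintype.card ι + Fintype.card κ = finrank 𝕜 E) :
    ∃ b : ι → E, LinearIndependent 𝕜 (Sum.elim b c) := by
  obtain ⟨W, hW⟩ := (span 𝕜 (range c)).exists_isCompl
  have hWdim : finrank 𝕜 W = Fintype.card ι := by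
    have := finrank_add_eq_of_isCompl hW
    rw [finrank_span_eq_card hc] at this
    omega
  let bW := (finBasis 𝕜 W).reindex (Fintype.equivFinOfCardEq hWdim.symm).symm
  refine ⟨W.subtype ∘ bW, linearIndependent_sum.2 ⟨?_, hc, ?_⟩⟩
  · exact bW.linearIndependent.map' _ W.ker_subtype
  · rw [Sum.elim_comp_inl, Sum.elim_comp_inr, bW.span_range_subtype_comp]
    exact hW.symm.disjoint

theorem dense_setOf_linearIndependent_sumElim [NontriviallyNormedField 𝕜] [Module 𝕜 E]
    [FiniteDimensional 𝕜 E] [TopologicalSpace E] [IsTopologicalAddGroup E] [ContinuousSMul 𝕜 E]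
    {c : κ → E} (hc : LinearIndependent 𝕜 c)
    (hcard : Fintype.card ι + Fintype.card κ = finrank 𝕜 E) :
    Dense {b : ι → E | LinearIndependent 𝕜 (Sum.elim b c)} := by
  classical
  obtain ⟨b₁, hb₁⟩ := exists_linearIndependent_sumElim hc hcard
  let B := basisOfLinearIndependentOfCardEqFinrank' _ hb₁ (by simpa using hcard)
  intro b₀
  have hline (t : 𝕜) : Sum.elim (AffineMap.lineMap b₀ b₁ t : ι → E) c =
      AffineMap.lineMap (Sum.elim b₀ c) (Sum.elim b₁ c) t := by
    ext (i | i) <;> simp [AffineMap.lineMap_apply_module, ← add_smul]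
  have hgood :
      Dense {t : 𝕜 | LinearIndependent 𝕜 (Sum.elim (AffineMap.lineMap b₀ b₁ t : ι → E) c)} := by
    simpa [hline, Set.sdiff_eq, Set.compl_ofPred] using
      dense_univ.sdiff_finite (B.finite_setOf_not_linearIndependent_lineMap _ hb₁)
  simpa using map_mem_closure AffineMap.lineMap_continuous (hgood 0) (fun t ht => ht)

theorem stmt_8_general (k j : ℕ) (hjk : j ≤ k)
    (U : Set (Fin (k - j) → (Fin k → ℝ))) (hU : IsOpen U) (hne : U.Nonempty)
    (ℓ' : Submodule ℝ (Fin k → ℝ)) (hℓ' : Module.finrank ℝ ℓ' = j) :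
    ∃ b ∈ U, LinearIndependent ℝ b ∧
      Submodule.span ℝ (Set.range b) ⊓ ℓ' = ⊥ := by
  let c := ℓ'.subtype ∘ finBasis ℝ ℓ'
  have hc : LinearIndependent ℝ c := (finBasis ℝ ℓ').linearIndependent.map' _ ℓ'.ker_subtype
  have hcard : Fintype.card (Fin (k - j)) + Fintype.card (Fin (finrank ℝ ℓ')) =
      finrank ℝ (Fin k → ℝ) := by
    simp only [Fintype.card_fin, hℓ', finrank_fin_fun]
    omega
  obtain ⟨b, hbU, hb⟩ :=
    (dense_setOf_linearIndependent_sumElim hc hcard).inter_open_nonempty U hU hne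
  obtain ⟨hb, -, hdisj⟩ := linearIndependent_sum.1 hb
  rw [Sum.elim_comp_inl] at hb
  rw [Sum.elim_comp_inl, Sum.elim_comp_inr, (finBasis ℝ ℓ').span_range_subtype_comp] at hdisj
  exact ⟨b, hbU, hb, hdisj.eq_bot⟩

/-- For any nonempty open set `U` of `(k−j)`-tuples of vectors of `ℝ^k` (parametrizing, via
spans of linearly independent tuples, the nonempty open subsets of the Grassmannian
`Gr(k, k−j)`), and any `j`-dimensional subspace `ℓ'` of `ℝ^k`, there is a tuple `b ∈ U`
which is linearly independent and whose span meets `ℓ'` trivially; i.e.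
`⋂_{ℓ ∈ U} Ω(ℓ) = ∅` where `Ω(ℓ) = {ℓ' ∈ Gr(k,j) : ℓ ∩ ℓ' ≠ 0}`. -/
theorem stmt_8 (k j : ℕ) (hj1 : 1 ≤ j) (hjk : j ≤ k)
    (U : Set (Fin (k - j) → (Fin k → ℝ))) (hU : IsOpen U) (hne : U.Nonempty)
    (ℓ' : Submodule ℝ (Fin k → ℝ)) (hℓ' : Module.finrank ℝ ℓ' = j) :
    ∃ b ∈ U, LinearIndependent ℝ b ∧
      Submodule.span ℝ (Set.range b) ⊓ ℓ' = ⊥ :=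
  stmt_8_general k j hjk U hU hne ℓ' hℓ'
end

section
/- Let P_1 = ∑_{i=1}^{k} ∏_{j=1}^{d} (X_i − j)^2 and P_2 = (X_{k+1} − 1)(X_{k+1} − 2) in R[X_1,…,X_{k+1}]. Then the common real zero set of {P_1, P_2} has exactly 2·d^k connected components (isolated points), while the product of the degrees of P_1 and P_2 is 2d·2 = 4d; in particular for k ≥ 2 and d ≥ 3 the number of connected components exceeds the product of the degrees. -/
/-!
A sum of squares vanishes iff every term does, so the zero set is the finite grid
`{1, …, d}^k × {1, 2}`. Being finite, it is discrete, hence its connected components are its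
`2 d^k` points.
-/

open Finset

lemma card_connectedComponents_of_totallyDisconnected (X : Type*) [TopologicalSpace X]
    [TotallyDisconnectedSpace X] : Nat.card (ConnectedComponents X) = Nat.card X := by
  refine (Nat.card_eq_of_bijective ConnectedComponents.mk
    ⟨fun x y hxy => ?_, ConnectedComponents.surjective_coe⟩).symm
  simpa using ConnectedComponents.coe_eq_coe'.mp hxy

lemma prod_sub_natCast_eq_zero_iff {R : Type*} [CommRing R] [NoZeroDivisors R] [CharZero R]
    (s : Finset ℕ) (t : R) : ∏ j ∈ s, (t - (j : R)) = 0 ↔ t ∈ s.map Nat.castEmbedding := by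
  simp only [prod_eq_zero_iff, sub_eq_zero, mem_map, Nat.castEmbedding_apply]
  exact exists_congr fun _ => and_congr_right fun _ => eq_comm

noncomputable def gridFactor (k d : ℕ) : Fin (k + 1) → Finset ℝ :=
  Fin.lastCases {1, 2} fun _ => (Icc 1 d).map Nat.castEmbedding

lemma zeroSet_eq_piFinset_gridFactor (k d : ℕ) :
    {x : Fin (k + 1) → ℝ |
      ∑ i : Fin k, (∏ j ∈ Icc 1 d, (x i.castSucc - (j : ℝ))) ^ 2 = 0 ∧
      (x (Fin.last k) - 1) * (x (Fin.last k) - 2) = 0} =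
    ↑(Fintype.piFinset (gridFactor k d)) := by
  ext x
  simp only [Set.mem_ofPred_eq, Fintype.coe_piFinset, Set.mem_pi, Set.mem_univ,
    true_imp_iff, Fin.forall_fin_succ', gridFactor, Fin.lastCases_castSucc, Fin.lastCases_last,
    sq, sum_mul_self_eq_zero_iff, mem_univ, prod_sub_natCast_eq_zero_iff, mem_coe, mem_insert,
    mem_singleton, mul_eq_zero, sub_eq_zero]

/-- Failure of a "Bezout-type" bound for real algebraic sets: for
`P₁ = ∑_{i=1}^{k} ∏_{j=1}^{d} (X_i − j)²` and `P₂ = (X_{k+1} − 1)(X_{k+1} − 2)`, the common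
real zero set of `{P₁, P₂}` in `ℝ^{k+1}` has exactly `2·d^k` connected components, while the
product of the degrees is `2d·2 = 4d`; for `k ≥ 2` and `d ≥ 3` the number of connected
components exceeds the product of the degrees. -/
theorem stmt_10 (k d : ℕ) :
    Nat.card (ConnectedComponents
        ({x : Fin (k + 1) → ℝ |
          ∑ i : Fin k, (∏ j ∈ Finset.Icc 1 d, (x i.castSucc - (j : ℝ))) ^ 2 = 0 ∧
          (x (Fin.last k) - 1) * (x (Fin.last k) - 2) = 0} :
          Set (Fin (k + 1) → ℝ))) = 2 * d ^ k ∧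
    (2 ≤ k → 3 ≤ d → 2 * d * 2 < 2 * d ^ k) := by
  refine ⟨?_, fun hk hd => ?_⟩
  · rw [zeroSet_eq_piFinset_gridFactor, card_connectedComponents_of_totallyDisconnected,
      Nat.card_coe_set_eq, Set.ncard_coe_finset, Fintype.card_piFinset, Fin.prod_univ_castSucc]
    simp [gridFactor, mul_comm]
  · calc 2 * d * 2 < 2 * d ^ 2 := by nlinarith
      _ ≤ 2 * d ^ k := Nat.mul_le_mul_left 2 (Nat.pow_le_pow_right (by omega) hk)
end
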